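/- arXiv:1802.06363 — 3 statements merged into one kernel-verified Lean document; each statement's English description precedes it below -/
import Mathlib

section
/- Let (f_k)_{k∈ℕ} be a Bessel sequence in a Hilbert space H₁ with bound B, (g_k)_{k∈ℕ} a Bessel sequence in a Hilbert space H₂ with bound B', and m = (m_k) a sequence converging to 0 (m ∈ c₀). Then the Bessel multiplier M_{m,(g_k),(f_k)} f = ∑_k m_k ⟨f, f_k⟩ g_k is a compact operator from H₁ to H₂. -/
/-! The partial sums `∑ k ∈ s, m k ⟪f k, ·⟫ g k` have finite rank, hence are compact. If
`‖m k‖ ≤ ε` off `s`, then by Cauchy–Schwarz and the two Bessel bounds the tail of the series has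
norm at most `ε √B √B' ‖x‖`, so the partial sums converge to `M` in operator norm. Compact operators
into a Banach space form a closed set, so `M` is compact. -/

open Filter Topology
open scoped InnerProductSpace

theorem summable_and_tsum_mul_le_sqrt_mul_sqrt {ι : Type*} {a b : ι → ℝ} (ha : ∀ k, 0 ≤ a k)
    (hb : ∀ k, 0 ≤ b k) (ha2 : Summable fun k => a k ^ 2) (hb2 : Summable fun k => b k ^ 2) :
    Summable (fun k => a k * b k) ∧
      ∑' k, a k * b k ≤ √(∑' k, a k ^ 2) * √(∑' k, b k ^ 2) := by
  simp only [← Real.rpow_two, Real.sqrt_eq_rpow] at ha2 hb2 ⊢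
  exact Real.summable_and_inner_le_Lp_mul_Lq_tsum_of_nonneg .two_two ha hb ha2 hb2

theorem isCompactOperator_smulRight {𝕜 E F : Type*} [RCLike 𝕜] [NormedAddCommGroup E]
    [NormedSpace 𝕜 E] [NormedAddCommGroup F] [NormedSpace 𝕜 F] (φ : E →L[𝕜] 𝕜) (v : F) :
    IsCompactOperator (φ.smulRight v) :=
  (isCompactOperator_of_locallyCompactSpace_dom φ).continuous_comp
    (continuous_id.smul continuous_const)

section BesselMultiplier

variable {ι 𝕜 E F : Type*} [RCLike 𝕜] [NormedAddCommGroup E] [InnerProductSpace 𝕜 E]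
  [NormedAddCommGroup F] [InnerProductSpace 𝕜 F]

variable (𝕜) in
def IsBesselSeq (f : ι → E) (B : ℝ) : Prop :=
  ∀ x, Summable (fun k => ‖⟪f k, x⟫_𝕜‖ ^ 2) ∧ ∑' k, ‖⟪f k, x⟫_𝕜‖ ^ 2 ≤ B * ‖x‖ ^ 2

theorem IsBesselSeq.comp_injective {κ : Type*} {f : ι → E} {B : ℝ} (hf : IsBesselSeq 𝕜 f B)
    {e : κ → ι} (he : Function.Injective e) : IsBesselSeq 𝕜 (f ∘ e) B := fun x =>
  ⟨(hf x).1.comp_injective he,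
    (tsum_comp_le_tsum_of_inj (hf x).1 (fun _ => sq_nonneg _) he).trans (hf x).2⟩

theorem IsBesselSeq.norm_le_of_hasSum {g : ι → F} {B : ℝ} (hg : IsBesselSeq 𝕜 g B)
    {c : ι → 𝕜} (hc : Summable fun k => ‖c k‖ ^ 2) {S : F}
    (hS : HasSum (fun k => c k • g k) S) :
    ‖S‖ ≤ √B * √(∑' k, ‖c k‖ ^ 2) := by
  obtain ⟨hsum, hCS⟩ := summable_and_tsum_mul_le_sqrt_mul_sqrt (fun k => norm_nonneg (c k))
    (fun k => norm_nonneg ⟪g k, S⟫_𝕜) hc (hg S).1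
  have hterm : ∀ k, ‖⟪S, c k • g k⟫_𝕜‖ = ‖c k‖ * ‖⟪g k, S⟫_𝕜‖ := fun k => by
    rw [inner_smul_right, norm_mul, norm_inner_symm]
  have hsq : ‖S‖ ^ 2 ≤ √(∑' k, ‖c k‖ ^ 2) * (√B * ‖S‖) :=
    calc ‖S‖ ^ 2 = ‖⟪S, S⟫_𝕜‖ := by
          rw [inner_self_eq_norm_sq_to_K, norm_pow, RCLike.norm_ofReal, abs_norm]
      _ = ‖∑' k, ⟪S, c k • g k⟫_𝕜‖ := congrArg norm ((innerSL 𝕜 S).hasSum hS).tsum_eq.symm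
      _ ≤ ∑' k, ‖c k‖ * ‖⟪g k, S⟫_𝕜‖ := by
        simpa only [hterm] using norm_tsum_le_tsum_norm (hsum.congr fun k => (hterm k).symm)
      _ ≤ √(∑' k, ‖c k‖ ^ 2) * √(B * ‖S‖ ^ 2) := hCS.trans (by gcongr; exact (hg S).2)
      _ = √(∑' k, ‖c k‖ ^ 2) * (√B * ‖S‖) := by
        rw [Real.sqrt_mul' B (sq_nonneg _), Real.sqrt_sq (norm_nonneg S)]
  rcases (norm_nonneg S).eq_or_lt with hS0 | hSpos
  · rw [← hS0]; positivity
  · nlinarith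

theorem IsBesselSeq.norm_le_of_hasSum_multiplier {f : ι → E} {g : ι → F} {B B' ε : ℝ}
    (hf : IsBesselSeq 𝕜 f B) (hg : IsBesselSeq 𝕜 g B') {μ : ι → 𝕜} (hε : 0 ≤ ε)
    (hμ : ∀ k, ‖μ k‖ ≤ ε) {x : E} {S : F}
    (hS : HasSum (fun k => μ k • ⟪f k, x⟫_𝕜 • g k) S) :
    ‖S‖ ≤ ε * √B * √B' * ‖x‖ := by
  set c : ι → 𝕜 := fun k => μ k * ⟪f k, x⟫_𝕜
  have hc : ∀ k, ‖c k‖ ^ 2 ≤ ε ^ 2 * ‖⟪f k, x⟫_𝕜‖ ^ 2 := fun k => by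
    rw [norm_mul, mul_pow]; gcongr; exact hμ k
  have hc2 : Summable fun k => ‖c k‖ ^ 2 :=
    ((hf x).1.mul_left _).of_nonneg_of_le (fun _ => sq_nonneg _) hc
  have hc_tsum : ∑' k, ‖c k‖ ^ 2 ≤ ε ^ 2 * (B * ‖x‖ ^ 2) :=
    (hc2.tsum_le_tsum hc ((hf x).1.mul_left _)).trans <| by
      rw [tsum_mul_left]; gcongr; exact (hf x).2
  calc ‖S‖ ≤ √B' * √(∑' k, ‖c k‖ ^ 2) :=
        hg.norm_le_of_hasSum hc2 (by simpa only [c, mul_smul] using hS)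
    _ ≤ √B' * √(ε ^ 2 * (B * ‖x‖ ^ 2)) := by gcongr
    _ = ε * √B * √B' * ‖x‖ := by
      rw [Real.sqrt_mul (sq_nonneg ε), Real.sqrt_sq hε, Real.sqrt_mul' B (sq_nonneg _),
        Real.sqrt_sq (norm_nonneg x)]
      ring

noncomputable def partialMultiplier (m : ι → 𝕜) (f : ι → E) (g : ι → F) (s : Finset ι) :
    E →L[𝕜] F :=
  ∑ k ∈ s, m k • (innerSL 𝕜 (f k)).smulRight (g k)

theorem partialMultiplier_apply (m : ι → 𝕜) (f : ι → E) (g : ι → F) (s : Finset ι) (x : E) :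
    partialMultiplier m f g s x = ∑ k ∈ s, m k • ⟪f k, x⟫_𝕜 • g k := by
  simp [partialMultiplier]

theorem isCompactOperator_partialMultiplier (m : ι → 𝕜) (f : ι → E) (g : ι → F)
    (s : Finset ι) : IsCompactOperator (partialMultiplier m f g s) :=
  Submodule.sum_mem (compactOperator (RingHom.id 𝕜) E F) fun _ _ =>
    Submodule.smul_mem _ _ (isCompactOperator_smulRight _ _)

variable {m : ι → 𝕜} {f : ι → E} {g : ι → F} {B B' : ℝ} {M : E →L[𝕜] F}

theorem norm_sub_partialMultiplier_le (hf : IsBesselSeq 𝕜 f B) (hg : IsBesselSeq 𝕜 g B')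
    (hM : ∀ x, HasSum (fun k => m k • ⟪f k, x⟫_𝕜 • g k) (M x)) {s : Finset ι} {ε : ℝ}
    (hε : 0 ≤ ε) (hs : ∀ k ∉ s, ‖m k‖ ≤ ε) :
    ‖M - partialMultiplier m f g s‖ ≤ ε * √B * √B' := by
  refine ContinuousLinearMap.opNorm_le_bound _ (by positivity) fun x => ?_
  have htail : HasSum (fun k : {k // k ∉ s} => m k • ⟪f k, x⟫_𝕜 • g k)
      ((M - partialMultiplier m f g s) x) :=
    (s.hasSum_compl_iff (f := fun k => m k • ⟪f k, x⟫_𝕜 • g k)).2 <| by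
      rw [sub_apply, partialMultiplier_apply, sub_add_cancel]
      exact hM x
  exact (hf.comp_injective Subtype.val_injective).norm_le_of_hasSum_multiplier
    (hg.comp_injective Subtype.val_injective) hε (fun k => hs k.1 k.2) htail

theorem tendsto_partialMultiplier (hf : IsBesselSeq 𝕜 f B) (hg : IsBesselSeq 𝕜 g B')
    (hm : Tendsto m cofinite (𝓝 0))
    (hM : ∀ x, HasSum (fun k => m k • ⟪f k, x⟫_𝕜 • g k) (M x)) :
    Tendsto (partialMultiplier m f g) atTop (𝓝 M) := by
  refine Metric.tendsto_nhds.2 fun δ hδ => ?_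
  obtain ⟨ε, hε, hεδ⟩ := exists_pos_mul_lt hδ (√B * √B')
  have hsmall : {k | ¬ ‖m k‖ ≤ ε}.Finite :=
    eventually_cofinite.1 <| hm.norm.eventually <| ge_mem_nhds <| by rwa [norm_zero]
  filter_upwards [eventually_ge_atTop hsmall.toFinset] with s hs
  have hbound := norm_sub_partialMultiplier_le hf hg hM hε.le fun k hk => by
    by_contra h
    exact hk (hs (hsmall.mem_toFinset.2 h))
  rw [dist_comm, dist_eq_norm]
  linarith

theorem isCompactOperator_of_hasSum_multiplier [CompleteSpace F] (hf : IsBesselSeq 𝕜 f B)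
    (hg : IsBesselSeq 𝕜 g B') (hm : Tendsto m cofinite (𝓝 0))
    (hM : ∀ x, HasSum (fun k => m k • ⟪f k, x⟫_𝕜 • g k) (M x)) : IsCompactOperator M :=
  isCompactOperator_of_tendsto (tendsto_partialMultiplier hf hg hm hM)
    (.of_forall (isCompactOperator_partialMultiplier m f g))

end BesselMultiplier

theorem bessel_multiplier_compact_of_c0_general
    {H₁ H₂ : Type*} [NormedAddCommGroup H₁] [InnerProductSpace ℂ H₁]
    [NormedAddCommGroup H₂] [InnerProductSpace ℂ H₂] [CompleteSpace H₂]
    (f : ℕ → H₁) (g : ℕ → H₂) (B B' : ℝ)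
    (hf : ∀ x : H₁, Summable (fun k => ‖(inner ℂ (f k) x : ℂ)‖ ^ 2) ∧
      ∑' k, ‖(inner ℂ (f k) x : ℂ)‖ ^ 2 ≤ B * ‖x‖ ^ 2)
    (hg : ∀ y : H₂, Summable (fun k => ‖(inner ℂ (g k) y : ℂ)‖ ^ 2) ∧
      ∑' k, ‖(inner ℂ (g k) y : ℂ)‖ ^ 2 ≤ B' * ‖y‖ ^ 2)
    (m : ℕ → ℂ) (hm : Filter.Tendsto m Filter.atTop (nhds 0))
    (M : H₁ →L[ℂ] H₂)
    (hM : ∀ x : H₁, HasSum (fun k => m k • (inner ℂ (f k) x : ℂ) • g k) (M x)) :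
    IsCompactOperator (M : H₁ → H₂) :=
  isCompactOperator_of_hasSum_multiplier hf hg (Nat.cofinite_eq_atTop ▸ hm) hM

/-- If `(f k)` is a Bessel sequence in `H₁` with bound `B`, `(g k)` is a
Bessel sequence in `H₂` with bound `B'`, and `m` is a sequence converging to `0`
(i.e. `m ∈ c₀`), then the Bessel multiplier `M : f ↦ ∑ k, m k ⟨f, f k⟩ g k` is a compact
operator from `H₁` to `H₂`. -/
theorem bessel_multiplier_compact_of_c0
    {H₁ H₂ : Type*} [NormedAddCommGroup H₁] [InnerProductSpace ℂ H₁] [CompleteSpace H₁]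
    [NormedAddCommGroup H₂] [InnerProductSpace ℂ H₂] [CompleteSpace H₂]
    (f : ℕ → H₁) (g : ℕ → H₂) (B B' : ℝ) (hB : 0 < B) (hB' : 0 < B')
    (hf : ∀ x : H₁, Summable (fun k => ‖(inner ℂ (f k) x : ℂ)‖ ^ 2) ∧
      ∑' k, ‖(inner ℂ (f k) x : ℂ)‖ ^ 2 ≤ B * ‖x‖ ^ 2)
    (hg : ∀ y : H₂, Summable (fun k => ‖(inner ℂ (g k) y : ℂ)‖ ^ 2) ∧
      ∑' k, ‖(inner ℂ (g k) y : ℂ)‖ ^ 2 ≤ B' * ‖y‖ ^ 2)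
    (m : ℕ → ℂ) (hm : Filter.Tendsto m Filter.atTop (nhds 0))
    (M : H₁ →L[ℂ] H₂)
    (hM : ∀ x : H₁, HasSum (fun k => m k • (inner ℂ (f k) x : ℂ) • g k) (M x)) :
    IsCompactOperator (M : H₁ → H₂) :=
  bessel_multiplier_compact_of_c0_general f g B B' hf hg m hm M hM
end

section
/- Let (f_k)_{k∈ℕ} and (g_k)_{k∈ℕ} be Bessel sequences in a Hilbert space H and U a nonzero bounded operator on ℓ²(ℕ). If the generalized Bessel multiplier M_{U,(g_k),(f_k)} = D_{(g_k)} ∘ U ∘ C_{(f_k)} is bounded below on H, i.e. there exists C > 0 with C‖f‖ ≤ ‖M_{U,(g_k),(f_k)} f‖ for all f ∈ H, then (f_k) is a frame for H. -/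
noncomputable section

local notation "ℓ²" => lp (fun _ : ℕ => ℂ) 2

/-! Since `‖C x‖² = ∑ₖ |⟨f k, x⟩|²`, the lower frame inequality says that the analysis
operator `C` is bounded below. Writing `M = (D ∘ U) ∘ C` with `D ∘ U` bounded gives
`c ‖x‖ ≤ ‖M x‖ ≤ ‖D ∘ U‖ ‖C x‖`. -/

theorem lp.norm_sq_eq_tsum {ι : Type*} {E : ι → Type*} [∀ i, NormedAddCommGroup (E i)]
    (a : lp E 2) : ‖a‖ ^ 2 = ∑' i, ‖a i‖ ^ 2 := by
  simpa only [ENNReal.toReal_ofNat, Real.rpow_two] using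
    lp.norm_rpow_eq_tsum (p := 2) (by norm_num) a

theorem ContinuousLinearMap.exists_pos_mul_norm_le_of_comp
    {𝕜 E F G : Type*} [NontriviallyNormedField 𝕜]
    [SeminormedAddCommGroup E] [SeminormedAddCommGroup F] [SeminormedAddCommGroup G]
    [NormedSpace 𝕜 E] [NormedSpace 𝕜 F] [NormedSpace 𝕜 G]
    (S : F →L[𝕜] G) (T : E →L[𝕜] F) {c : ℝ} (hc : 0 < c)
    (h : ∀ x, c * ‖x‖ ≤ ‖S (T x)‖) : ∃ a > 0, ∀ x, a * ‖x‖ ≤ ‖T x‖ := by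
  have hS : 0 < ‖S‖ + 1 := by positivity
  refine ⟨c / (‖S‖ + 1), div_pos hc hS, fun x => ?_⟩
  rw [div_mul_eq_mul_div, div_le_iff₀ hS]
  calc c * ‖x‖ ≤ ‖S‖ * ‖T x‖ := (h x).trans (S.le_opNorm _)
    _ ≤ ‖T x‖ * (‖S‖ + 1) := by nlinarith [norm_nonneg (T x)]

theorem frame_of_multiplier_bounded_below_general
    {H : Type*} [NormedAddCommGroup H] [InnerProductSpace ℂ H]
    (f : ℕ → H) (B : ℝ) (hB : 0 < B)
    (hf : ∀ x : H, Summable (fun k => ‖(inner ℂ (f k) x : ℂ)‖ ^ 2) ∧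
      ∑' k, ‖(inner ℂ (f k) x : ℂ)‖ ^ 2 ≤ B * ‖x‖ ^ 2)
    (U : ℓ² →L[ℂ] ℓ²)
    (C : H →L[ℂ] ℓ²) (D : ℓ² →L[ℂ] H)
    (hC : ∀ (x : H) (k : ℕ), C x k = (inner ℂ (f k) x : ℂ))
    (c : ℝ) (hc : 0 < c)
    (hbelow : ∀ x : H, c * ‖x‖ ≤ ‖(D.comp (U.comp C)) x‖) :
    ∃ A > (0 : ℝ), ∃ B'' > (0 : ℝ), ∀ x : H,
      A * ‖x‖ ^ 2 ≤ ∑' k, ‖(inner ℂ (f k) x : ℂ)‖ ^ 2 ∧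
      ∑' k, ‖(inner ℂ (f k) x : ℂ)‖ ^ 2 ≤ B'' * ‖x‖ ^ 2 := by
  obtain ⟨a, ha, hCbelow⟩ := (D.comp U).exists_pos_mul_norm_le_of_comp C hc hbelow
  refine ⟨a ^ 2, by positivity, B, hB, fun x => ⟨?_, (hf x).2⟩⟩
  calc a ^ 2 * ‖x‖ ^ 2 = (a * ‖x‖) ^ 2 := by ring
    _ ≤ ‖C x‖ ^ 2 := pow_le_pow_left₀ (by positivity) (hCbelow x) 2
    _ = ∑' k, ‖(inner ℂ (f k) x : ℂ)‖ ^ 2 := by simp only [lp.norm_sq_eq_tsum, hC]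

/-- Let `(f k)` and `(g k)` be Bessel sequences in `H` and `U` a nonzero
bounded operator on `ℓ²(ℕ)`. If the generalized Bessel multiplier `M = D_g ∘ U ∘ C_f` is
bounded below on `H`, then `(f k)` is a frame for `H`. -/
theorem frame_of_multiplier_bounded_below
    {H : Type*} [NormedAddCommGroup H] [InnerProductSpace ℂ H] [CompleteSpace H]
    (f g : ℕ → H) (B B' : ℝ) (hB : 0 < B) (hB' : 0 < B')
    (hf : ∀ x : H, Summable (fun k => ‖(inner ℂ (f k) x : ℂ)‖ ^ 2) ∧
      ∑' k, ‖(inner ℂ (f k) x : ℂ)‖ ^ 2 ≤ B * ‖x‖ ^ 2)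
    (hg : ∀ y : H, Summable (fun k => ‖(inner ℂ (g k) y : ℂ)‖ ^ 2) ∧
      ∑' k, ‖(inner ℂ (g k) y : ℂ)‖ ^ 2 ≤ B' * ‖y‖ ^ 2)
    (U : ℓ² →L[ℂ] ℓ²) (hU : U ≠ 0)
    (C : H →L[ℂ] ℓ²) (D : ℓ² →L[ℂ] H)
    (hC : ∀ (x : H) (k : ℕ), C x k = (inner ℂ (f k) x : ℂ))
    (hD : ∀ c : ℓ², HasSum (fun k => c k • g k) (D c))
    (c : ℝ) (hc : 0 < c)
    (hbelow : ∀ x : H, c * ‖x‖ ≤ ‖(D.comp (U.comp C)) x‖) :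
    ∃ A > (0 : ℝ), ∃ B'' > (0 : ℝ), ∀ x : H,
      A * ‖x‖ ^ 2 ≤ ∑' k, ‖(inner ℂ (f k) x : ℂ)‖ ^ 2 ∧
      ∑' k, ‖(inner ℂ (f k) x : ℂ)‖ ^ 2 ≤ B'' * ‖x‖ ^ 2 :=
  frame_of_multiplier_bounded_below_general f B hB hf U C D hC c hc hbelow
end
end

section
/- Let (f_k)_{k∈ℕ} and (g_k)_{k∈ℕ} be Riesz bases for a Hilbert space H with biorthogonal (dual) Riesz bases (f̃_k) and (g̃_k), respectively, and let U be an invertible bounded operator on ℓ²(ℕ). Then the generalized Bessel multiplier M_{U,(g_k),(f_k)} is invertible and its inverse is (M_{U,(g_k),(f_k)})⁻¹ = M_{U⁻¹,(f̃_k),(g̃_k)} = D_{(f̃_k)} ∘ U⁻¹ ∘ C_{(g̃_k)}. -/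
/-!
Biorthogonality makes `C_f ∘ D_{f̃}` and `C_{g̃} ∘ D_g` the identity of `ℓ²`. Completeness upgrades
these one-sided inverses to two-sided ones: `C_f` is injective because `(f_k)` is complete, and
`D_g ∘ C_{g̃}` fixes every `g_j = D_g δ_j`, hence is the identity on the dense span of `(g_k)`.
-/

noncomputable section

local notation "ℓ²" => lp (fun _ : ℕ => ℂ) 2

section FrameOperators

variable {𝕜 ι H : Type*} [RCLike 𝕜] [NormedAddCommGroup H] [InnerProductSpace 𝕜 H]

def IsSynthesisOperator (D : lp (fun _ : ι => 𝕜) 2 →L[𝕜] H) (e : ι → H) : Prop :=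
  ∀ c, HasSum (fun k => c k • e k) (D c)

def IsAnalysisOperator (C : H →L[𝕜] lp (fun _ : ι => 𝕜) 2) (e : ι → H) : Prop :=
  ∀ x k, C x k = inner 𝕜 (e k) x

variable (𝕜) in
def Biorthogonal [DecidableEq ι] (a b : ι → H) : Prop :=
  ∀ j k, inner 𝕜 (a k) (b j) = if j = k then 1 else 0

variable {D : lp (fun _ : ι => 𝕜) 2 →L[𝕜] H} {C : H →L[𝕜] lp (fun _ : ι => 𝕜) 2} {e e' : ι → H}

theorem Biorthogonal.symm [DecidableEq ι] (h : Biorthogonal 𝕜 e e') : Biorthogonal 𝕜 e' e := by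
  intro j k
  rw [← inner_conj_symm, h k j]
  split_ifs <;> simp_all

theorem IsSynthesisOperator.apply_single [DecidableEq ι] (hD : IsSynthesisOperator D e) (j : ι) :
    D (lp.single 2 j 1) = e j := by
  refine (hD _).unique ?_
  convert hasSum_ite_eq j (e j) using 2 with k
  rw [lp.single_apply, Pi.single_apply]
  split_ifs with hkj
  · rw [hkj, one_smul]
  · rw [zero_smul]

theorem IsAnalysisOperator.comp_synthesis_eq_id [DecidableEq ι] (hC : IsAnalysisOperator C e')
    (hD : IsSynthesisOperator D e) (hbi : Biorthogonal 𝕜 e' e) :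
    C.comp D = ContinuousLinearMap.id 𝕜 _ := by
  ext c k
  rw [ContinuousLinearMap.comp_apply, hC, ContinuousLinearMap.id_apply]
  refine ((hD c).mapL (innerSL 𝕜 (e' k))).unique ?_
  convert hasSum_ite_eq k (c k) using 2 with j
  simp only [innerSL_apply_apply, inner_smul_right, hbi j k]
  split_ifs with hjk
  · rw [hjk, mul_one]
  · rw [mul_zero]

theorem IsAnalysisOperator.injective (hC : IsAnalysisOperator C e)
    (hspan : (Submodule.span 𝕜 (Set.range e)).topologicalClosure = ⊤) : Function.Injective C := by
  refine (injective_iff_map_eq_zero C).mpr fun x hx => ?_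
  have horth : innerSL 𝕜 x = 0 := by
    refine ContinuousLinearMap.ext_on (Submodule.dense_iff_topologicalClosure_eq_top.mpr hspan) ?_
    rintro _ ⟨k, rfl⟩
    have hk : inner 𝕜 (e k) x = 0 := by rw [← hC, hx]; rfl
    simpa using inner_eq_zero_symm.mp hk
  simpa using congrArg (· x) horth

theorem IsSynthesisOperator.comp_eq_id_of_comp_eq_id [DecidableEq ι]
    (hD : IsSynthesisOperator D e) (hCD : C.comp D = ContinuousLinearMap.id 𝕜 _)
    (hspan : (Submodule.span 𝕜 (Set.range e)).topologicalClosure = ⊤) :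
    D.comp C = ContinuousLinearMap.id 𝕜 H := by
  refine ContinuousLinearMap.ext_on (Submodule.dense_iff_topologicalClosure_eq_top.mpr hspan) ?_
  rintro _ ⟨j, rfl⟩
  rw [ContinuousLinearMap.comp_apply, ← hD.apply_single j, ← C.comp_apply, hCD]
  rfl

end FrameOperators

theorem generalized_riesz_multiplier_inverse_general
    {H : Type*} [NormedAddCommGroup H] [InnerProductSpace ℂ H]
    (f g tf tg : ℕ → H)
    (Dg Dtf : ℓ² →L[ℂ] H) (Cf Ctg : H →L[ℂ] ℓ²)
    (hDg : ∀ c : ℓ², HasSum (fun k => c k • g k) (Dg c))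
    (hDtf : ∀ c : ℓ², HasSum (fun k => c k • tf k) (Dtf c))
    (hCf : ∀ (x : H) (k : ℕ), Cf x k = (inner ℂ (f k) x : ℂ))
    (hCtg : ∀ (x : H) (k : ℕ), Ctg x k = (inner ℂ (tg k) x : ℂ))
    (hfspan : (Submodule.span ℂ (Set.range f)).topologicalClosure = ⊤)
    (hgspan : (Submodule.span ℂ (Set.range g)).topologicalClosure = ⊤)
    (hbif : ∀ j k : ℕ, (inner ℂ (f k) (tf j) : ℂ) = if j = k then 1 else 0)
    (hbig : ∀ j k : ℕ, (inner ℂ (g k) (tg j) : ℂ) = if j = k then 1 else 0)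
    (U V : ℓ² →L[ℂ] ℓ²)
    (hUV : U.comp V = ContinuousLinearMap.id ℂ ℓ²)
    (hVU : V.comp U = ContinuousLinearMap.id ℂ ℓ²) :
    (Dg.comp (U.comp Cf)).comp (Dtf.comp (V.comp Ctg)) = ContinuousLinearMap.id ℂ H ∧
    (Dtf.comp (V.comp Ctg)).comp (Dg.comp (U.comp Cf)) = ContinuousLinearMap.id ℂ H := by
  have hCfDtf : Cf.comp Dtf = .id ℂ ℓ² :=
    IsAnalysisOperator.comp_synthesis_eq_id hCf hDtf hbif
  have hCtgDg : Ctg.comp Dg = .id ℂ ℓ² :=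
    IsAnalysisOperator.comp_synthesis_eq_id hCtg hDg (Biorthogonal.symm hbig)
  have hDtfCf : Dtf.comp Cf = .id ℂ H := by
    have hinv : Function.LeftInverse Cf Dtf := fun c => congrArg (· c) hCfDtf
    ext x
    exact hinv.rightInverse_of_injective (IsAnalysisOperator.injective hCf hfspan) x
  have hDgCtg : Dg.comp Ctg = .id ℂ H :=
    IsSynthesisOperator.comp_eq_id_of_comp_eq_id hDg hCtgDg hgspan
  open ContinuousLinearMap in
  constructor
  · calc (Dg.comp (U.comp Cf)).comp (Dtf.comp (V.comp Ctg))
        = Dg.comp ((U.comp ((Cf.comp Dtf).comp V)).comp Ctg) := by simp only [comp_assoc]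
      _ = .id ℂ H := by rw [hCfDtf, id_comp, hUV, id_comp, hDgCtg]
  · calc (Dtf.comp (V.comp Ctg)).comp (Dg.comp (U.comp Cf))
        = Dtf.comp ((V.comp ((Ctg.comp Dg).comp U)).comp Cf) := by simp only [comp_assoc]
      _ = .id ℂ H := by rw [hCtgDg, id_comp, hVU, id_comp, hDtfCf]

/-- Let `(f k)` and `(g k)` be Riesz bases for `H` with biorthogonal (dual)
Riesz bases `(tf k)` and `(tg k)` respectively, and let `U` be an invertible bounded operator
on `ℓ²(ℕ)` (with inverse `V`). Then the generalized Bessel multiplier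
`M = D_g ∘ U ∘ C_f` is invertible with inverse `M⁻¹ = D_{tf} ∘ U⁻¹ ∘ C_{tg}`. -/
theorem generalized_riesz_multiplier_inverse
    {H : Type*} [NormedAddCommGroup H] [InnerProductSpace ℂ H] [CompleteSpace H]
    (f g tf tg : ℕ → H) (A B A' B' : ℝ)
    (hA : 0 < A) (hB : 0 < B) (hA' : 0 < A') (hB' : 0 < B')
    (Df Dg Dtf : ℓ² →L[ℂ] H) (Cf Ctg : H →L[ℂ] ℓ²)
    (hDf : ∀ c : ℓ², HasSum (fun k => c k • f k) (Df c))
    (hDg : ∀ c : ℓ², HasSum (fun k => c k • g k) (Dg c))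
    (hDtf : ∀ c : ℓ², HasSum (fun k => c k • tf k) (Dtf c))
    (hCf : ∀ (x : H) (k : ℕ), Cf x k = (inner ℂ (f k) x : ℂ))
    (hCtg : ∀ (x : H) (k : ℕ), Ctg x k = (inner ℂ (tg k) x : ℂ))
    (hfspan : (Submodule.span ℂ (Set.range f)).topologicalClosure = ⊤)
    (hgspan : (Submodule.span ℂ (Set.range g)).topologicalClosure = ⊤)
    (hfRiesz : ∀ c : ℓ², A * ‖c‖ ^ 2 ≤ ‖Df c‖ ^ 2 ∧ ‖Df c‖ ^ 2 ≤ B * ‖c‖ ^ 2)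
    (hgRiesz : ∀ c : ℓ², A' * ‖c‖ ^ 2 ≤ ‖Dg c‖ ^ 2 ∧ ‖Dg c‖ ^ 2 ≤ B' * ‖c‖ ^ 2)
    (hbif : ∀ j k : ℕ, (inner ℂ (f k) (tf j) : ℂ) = if j = k then 1 else 0)
    (hbig : ∀ j k : ℕ, (inner ℂ (g k) (tg j) : ℂ) = if j = k then 1 else 0)
    (U V : ℓ² →L[ℂ] ℓ²)
    (hUV : U.comp V = ContinuousLinearMap.id ℂ ℓ²)
    (hVU : V.comp U = ContinuousLinearMap.id ℂ ℓ²) :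
    (Dg.comp (U.comp Cf)).comp (Dtf.comp (V.comp Ctg)) = ContinuousLinearMap.id ℂ H ∧
    (Dtf.comp (V.comp Ctg)).comp (Dg.comp (U.comp Cf)) = ContinuousLinearMap.id ℂ H :=
  generalized_riesz_multiplier_inverse_general f g tf tg Dg Dtf Cf Ctg hDg hDtf hCf hCtg hfspan
    hgspan hbif hbig U V hUV hVU
end
end
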